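/- Let O be a DVR, A = O^n = A_1 × ... × A_s with A_i = O^{n_i}, T ⊆ A a local complete O-subalgebra of full O-rank, and J ⊆ T an ideal of finite index. If J is a principal ideal of T, then #∏_{i=1}^s T_i/J_i = #T/J, where T_i and J_i are the images of T and J under the projection onto A_i. -/

import Mathlib

set_option synthInstance.maxHeartbeats 400000

/-- The projection `T →ₐ[O] A_i = O^{n_i}` obtained by composing the inclusion of the
subalgebra `T ⊆ A = ∏ i, O^{n_i}` with the canonical projection `φ_i : A → A_i`. -/
noncomputable def projAlgHom {O : Type*} [CommRing O] {s : ℕ} {n : Fin s → ℕ}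
    (T : Subalgebra O (∀ i : Fin s, Fin (n i) → O)) (i : Fin s) :
    T →ₐ[O] (Fin (n i) → O) :=
  (Pi.evalAlgHom O (fun i => Fin (n i) → O) i).comp T.val

/-!
Write `J = gT`. Since `O` is infinite and `T/J` is finite, some `d ≠ 0` of `O` lies in `J`; then
`g` divides `d` in `A`, so multiplication by `g` is injective on `A` and by `g_i` on each `A_i`.
The map `O → T/J` also makes the residue field of `O` finite, hence every `O/cO` with `c ≠ 0` is
finite, and full rank makes `T ⊆ A` and `T_i ⊆ A_i` of finite index. For a subring `S ⊆ R` of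
finite index and `g ∈ S` regular in `R`, computing `[R : gS]` as `[R : S][S : gS]` and as
`[R : gR][gR : gS]`, with `[gR : gS] = [R : S]`, gives `#S/gS = #R/gR`. Hence
`∏ #T_i/g_iT_i = ∏ #A_i/g_iA_i = #A/gA = #T/gT`.
-/

open IsLocalRing

theorem IsDiscreteValuationRing.infinite (O : Type*) [CommRing O] [IsDomain O]
    [IsDiscreteValuationRing O] : Infinite O := by
  by_contra h
  have := not_infinite_iff_finite.mp h
  exact not_isField O (Finite.isField_of_domain O)

theorem IsDiscreteValuationRing.finite_quotient_of_ne_bot {O : Type*} [CommRing O] [IsDomain O]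
    [IsDiscreteValuationRing O] [Finite (ResidueField O)] {I : Ideal O} (hI : I ≠ ⊥) :
    Finite (O ⧸ I) := by
  obtain ⟨ϖ, hϖ⟩ := exists_irreducible O
  obtain ⟨k, rfl⟩ := ideal_eq_span_pow_irreducible hI hϖ
  exact finite_quotient_iff.mpr ⟨k, by rw [hϖ.maximalIdeal_eq, Ideal.span_singleton_pow]⟩

theorem IsLocalRing.finite_residueField_of_ringHom {R B : Type*} [CommRing R] [IsLocalRing R]
    [Ring B] [Nontrivial B] [Finite B] (f : R →+* B) : Finite (ResidueField R) := by
  have : Finite (R ⧸ RingHom.ker f) := Finite.of_injective _ f.kerLift_injective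
  exact Finite.of_surjective _
    (Ideal.Quotient.factor_surjective (le_maximalIdeal (RingHom.ker_ne_top f)))

theorem Ideal.exists_algebraMap_mem_of_finite_quotient (O : Type*) {T : Type*} [CommRing O]
    [Infinite O] [CommRing T] [Algebra O T] (J : Ideal T) [Finite (T ⧸ J)] :
    ∃ d : O, d ≠ 0 ∧ algebraMap O T d ∈ J := by
  obtain ⟨x, y, hxy, h⟩ :=
    Finite.exists_ne_map_eq_of_infinite (Ideal.Quotient.mk J ∘ algebraMap O T)
  exact ⟨x - y, sub_ne_zero.mpr hxy, by rw [map_sub]; exact Ideal.Quotient.eq.mp h⟩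

theorem IsLeftRegular.of_mul_eq_algebraMap {O A : Type*} [CommRing O] [IsDomain O] [CommRing A]
    [Algebra O A] [Module.IsTorsionFree O A] {g t : A} {d : O} (hd : d ≠ 0)
    (h : t * g = algebraMap O A d) : IsLeftRegular g := fun x y hxy =>
  smul_right_injective A hd <| by
    simp only [Algebra.smul_def, ← h, mul_assoc]
    exact congrArg (t * ·) hxy

theorem Submodule.finite_quotient_of_forall_exists_smul_mem {R M : Type*} [CommRing R]
    [IsDomain R] [AddCommGroup M] [Module R M] [Module.Finite R M]
    (hR : ∀ c : R, c ≠ 0 → Finite (R ⧸ Ideal.span {c})) (N : Submodule R M)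
    (hN : ∀ m, ∃ c : R, c ≠ 0 ∧ c • m ∈ N) : Finite (M ⧸ N) := by
  have htors : Module.IsTorsion R (M ⧸ N) := by
    rintro ⟨m⟩
    obtain ⟨c, hc, hcm⟩ := hN m
    exact ⟨⟨c, mem_nonZeroDivisors_of_ne_zero hc⟩,
      (Submodule.Quotient.mk_eq_zero N).mpr hcm⟩
  obtain ⟨c, hc_ann, hc⟩ := Submodule.annihilator_top_inter_nonZeroDivisors htors
  have hle : Ideal.span {c} • (⊤ : Submodule R M) ≤ N := by
    rw [Submodule.smul_le]
    rintro r hr m -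
    obtain ⟨a, rfl⟩ := Ideal.mem_span_singleton'.mp hr
    rw [mul_smul]
    refine N.smul_mem a ((Submodule.Quotient.mk_eq_zero N).mp ?_)
    rw [Submodule.Quotient.mk_smul]
    exact (Submodule.mem_annihilator.mp hc_ann) _ Submodule.mem_top
  have := hR c (nonZeroDivisors.ne_zero hc)
  have := Submodule.finite_quotient_smul (Ideal.span {c}) (Module.Finite.fg_top (R := R) (M := M))
  exact Finite.of_surjective _ (Submodule.factor_surjective hle)

theorem Subring.card_quotient_span_singleton {R : Type*} [CommRing R] (S : Subring R) {g : S}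
    (hg : IsLeftRegular (g : R)) (hS : S.toAddSubgroup.index ≠ 0) :
    Nat.card (S ⧸ Ideal.span {g}) = Nat.card (R ⧸ Ideal.span {(g : R)}) := by
  let μ := AddMonoidHom.mulLeft (g : R)
  have hgS : (Ideal.span {g}).toAddSubgroup.map S.toAddSubgroup.subtype =
      S.toAddSubgroup.map μ := by
    ext x
    simp only [AddSubgroup.mem_map, Submodule.mem_toAddSubgroup, Ideal.mem_span_singleton']
    constructor
    · rintro ⟨_, ⟨a, rfl⟩, rfl⟩
      exact ⟨a, a.2, mul_comm (g : R) a⟩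
    · rintro ⟨a, ha, rfl⟩
      exact ⟨⟨a, ha⟩ * g, ⟨⟨a, ha⟩, rfl⟩, by simp [μ, mul_comm]⟩
  have hμ : μ.range = (Ideal.span {(g : R)}).toAddSubgroup := by
    ext x
    simp [μ, Ideal.mem_span_singleton', mul_comm]
  have key := AddSubgroup.index_map_of_injective (Ideal.span {g}).toAddSubgroup
    (f := S.toAddSubgroup.subtype) Subtype.val_injective
  rw [AddSubgroup.range_subtype, hgS, AddSubgroup.index_map_of_injective _ hg, hμ, mul_comm]
    at key
  exact (Nat.eq_of_mul_eq_mul_right (Nat.pos_of_ne_zero hS) key).symm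

theorem Ideal.mem_span_singleton_pi {ι : Type*} {R : ι → Type*} [∀ i, CommRing (R i)]
    {t x : ∀ i, R i} : x ∈ Ideal.span {t} ↔ ∀ i, x i ∈ Ideal.span {t i} := by
  simp only [Ideal.mem_span_singleton', Classical.skolem, funext_iff, Pi.mul_apply]

theorem Ideal.card_quotient_span_singleton_pi {ι : Type*} [Fintype ι] {R : ι → Type*}
    [∀ i, CommRing (R i)] (t : ∀ i, R i) :
    Nat.card ((∀ i, R i) ⧸ Ideal.span {t}) = ∏ i, Nat.card (R i ⧸ Ideal.span {t i}) := by
  rw [← Nat.card_pi]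
  refine Nat.card_congr
    ((Quotient.congrRight fun x y => ?_).trans (Setoid.piQuotientEquiv _).symm)
  simp only [Setoid.piSetoid_apply, Submodule.quotientRel_def, Ideal.mem_span_singleton_pi,
    Pi.sub_apply]

theorem exists_smul_mem_range_projAlgHom {O : Type*} [CommRing O] {s : ℕ} {n : Fin s → ℕ}
    (T : Subalgebra O (∀ i : Fin s, Fin (n i) → O))
    (hfull : ∀ a : (∀ i : Fin s, Fin (n i) → O), ∃ c : O, c ≠ 0 ∧ c • a ∈ T)
    (i : Fin s) (m : Fin (n i) → O) :
    ∃ c : O, c ≠ 0 ∧ c • m ∈ (projAlgHom T i).range := by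
  obtain ⟨c, hc, hcm⟩ := hfull (Pi.single i m)
  exact ⟨c, hc, ⟨_, hcm⟩, by simp [projAlgHom]⟩

theorem prod_card_quot_eq_card_quot_of_principal_general
    {O : Type*} [CommRing O] [IsDomain O] [IsDiscreteValuationRing O]
    {s : ℕ} {n : Fin s → ℕ}
    (T : Subalgebra O (∀ i : Fin s, Fin (n i) → O))
    (hfull : ∀ a : (∀ i : Fin s, Fin (n i) → O), ∃ c : O, c ≠ 0 ∧ c • a ∈ T)
    (J : Ideal T) [Finite (T ⧸ J)] (hJ : J.IsPrincipal) :
    ∏ i : Fin s, Nat.card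
        ((projAlgHom T i).range ⧸ Ideal.map (projAlgHom T i).rangeRestrict J)
      = Nat.card (T ⧸ J) := by
  obtain ⟨g, rfl⟩ := hJ.principal
  rcases subsingleton_or_nontrivial (T ⧸ Ideal.span {g}) with hJ | hJ
  · rw [Ideal.Quotient.subsingleton_iff] at hJ
    simp [hJ, Ideal.map_top]
  have := IsDiscreteValuationRing.infinite O
  obtain ⟨d, hd, hdJ⟩ := (Ideal.span {g}).exists_algebraMap_mem_of_finite_quotient O
  obtain ⟨t, htg⟩ := Ideal.mem_span_singleton'.mp hdJ
  have hreg := IsLeftRegular.of_mul_eq_algebraMap hd (congrArg Subtype.val htg)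
  have hreg_proj (i) :=
    IsLeftRegular.of_mul_eq_algebraMap hd (congrFun (congrArg Subtype.val htg) i)
  have := finite_residueField_of_ringHom
    ((Ideal.Quotient.mk (Ideal.span {g})).comp (algebraMap O T))
  have hO (c : O) (hc : c ≠ 0) :=
    IsDiscreteValuationRing.finite_quotient_of_ne_bot (Ideal.span_singleton_eq_bot.not.mpr hc)
  have hT := Submodule.finite_quotient_of_forall_exists_smul_mem hO (Subalgebra.toSubmodule T) hfull
  have hT_proj (i) := Submodule.finite_quotient_of_forall_exists_smul_mem hO
    (Subalgebra.toSubmodule (projAlgHom T i).range) (exists_smul_mem_range_projAlgHom T hfull i)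
  simp_rw [Ideal.map_span, Set.image_singleton]
  calc ∏ i, Nat.card (_ ⧸ Ideal.span {(projAlgHom T i).rangeRestrict g})
      = ∏ i, Nat.card ((Fin (n i) → O) ⧸ Ideal.span {(g : ∀ i, Fin (n i) → O) i}) :=
        Finset.prod_congr rfl fun i _ =>
          Subring.card_quotient_span_singleton (projAlgHom T i).range.toSubring
            (g := (projAlgHom T i).rangeRestrict g) (hreg_proj i)
            (AddSubgroup.index_ne_zero_of_finite (hH := hT_proj i))
    _ = Nat.card ((∀ i : Fin s, Fin (n i) → O) ⧸ Ideal.span {(g : ∀ i, Fin (n i) → O)}) :=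
        (Ideal.card_quotient_span_singleton_pi _).symm
    _ = Nat.card (T ⧸ Ideal.span {g}) :=
        (Subring.card_quotient_span_singleton T.toSubring hreg
          (AddSubgroup.index_ne_zero_of_finite (hH := hT))).symm

/-- Proposition: with `O` a DVR, `A = ∏_{i=1}^s O^{n_i}`, `T ⊆ A` a local complete
`O`-subalgebra of full rank and `J ⊆ T` an ideal of finite index, if `J` is principal
then `#∏_{i=1}^s T_i/J_i = #T/J`, where `T_i = φ_i(T)` and `J_i = φ_i(J)`. -/
theorem prod_card_quot_eq_card_quot_of_principal
    {O : Type*} [CommRing O] [IsDomain O] [IsDiscreteValuationRing O]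
    {s : ℕ} {n : Fin s → ℕ} (hn : ∀ i, 0 < n i)
    (T : Subalgebra O (∀ i : Fin s, Fin (n i) → O))
    [IsLocalRing T] [IsAdicComplete (IsLocalRing.maximalIdeal T) T]
    (hfull : ∀ a : (∀ i : Fin s, Fin (n i) → O), ∃ c : O, c ≠ 0 ∧ c • a ∈ T)
    (J : Ideal T) [Finite (T ⧸ J)] (hJ : J.IsPrincipal) :
    ∏ i : Fin s, Nat.card
        ((projAlgHom T i).range ⧸ Ideal.map (projAlgHom T i).rangeRestrict J)
      = Nat.card (T ⧸ J) :=
  prod_card_quot_eq_card_quot_of_principal_general T hfull J hJ
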